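/- The 21 cells of the triangle of size 6 admit a fractional assignment x_{i,j} ∈ ℚ≥0 (with 1 ≤ j ≤ i ≤ 6) satisfying all row sums Σ_j x_{i,j} ≤ 1, all column sums Σ_i x_{i,j} ≤ 1, and all diagonal sums Σ x_{i,i−k} ≤ 1, with total sum Σ x_{i,j} = 30/7. In particular, the LP relaxation value LP(6) satisfies LP(6) ≥ 30/7 > N(6) = 4. -/

import Mathlib

/-- The triangle of size `n`: cells `(a,b)` with `1 ≤ b ≤ a ≤ n`. -/
def Triangle (n : ℕ) : Finset (ℕ × ℕ) :=
  (Finset.Icc 1 n ×ˢ Finset.Icc 1 n).filter (fun p => p.2 ≤ p.1)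

/-- No two distinct cells share a row (`a`), a column (`b`), or a standard
diagonal (value `a - b`). -/
def NonAttacking (S : Finset (ℕ × ℕ)) : Prop :=
  ∀ p ∈ S, ∀ q ∈ S, p ≠ q →
    p.1 ≠ q.1 ∧ p.2 ≠ q.2 ∧ (p.1 : ℤ) - p.2 ≠ (q.1 : ℤ) - q.2

/-- `N(n)`: the maximum size of a non-attacking set of cells in the triangle of size `n`. -/
noncomputable def maxDots (n : ℕ) : ℕ :=
  sSup {m : ℕ | ∃ S : Finset (ℕ × ℕ), S ⊆ Triangle n ∧ NonAttacking S ∧ S.card = m}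

/-- A fractional assignment on the cells of the triangle of size `6` is feasible
if it is nonnegative and every row sum, column sum, and diagonal sum is at most `1`. -/
def Feasible6 (x : ℕ → ℕ → ℚ) : Prop :=
  (∀ i ∈ Finset.Icc 1 6, ∀ j ∈ Finset.Icc 1 i, 0 ≤ x i j) ∧
  (∀ i ∈ Finset.Icc 1 6, ∑ j ∈ Finset.Icc 1 i, x i j ≤ 1) ∧
  (∀ j ∈ Finset.Icc 1 6, ∑ i ∈ Finset.Icc j 6, x i j ≤ 1) ∧
  (∀ k ∈ Finset.range 6, ∑ i ∈ Finset.Icc (k + 1) 6, x i (i - k) ≤ 1)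

/-- The value of the LP relaxation for `n = 6`. -/
noncomputable def LP6 : ℝ :=
  sSup {v : ℝ | ∃ x : ℕ → ℕ → ℚ, Feasible6 x ∧
    ((∑ i ∈ Finset.Icc 1 6, ∑ j ∈ Finset.Icc 1 i, x i j : ℚ) : ℝ) = v}

/-! For a cell `(a, b)` of the triangle of size `n`, the row offset `n - a`, the column offset
`b - 1` and the diagonal `a - b` are nonnegative and add up to `n - 1`. In a non-attacking set of
`m` cells each of the three takes `m` distinct values, so each sums to at least `m (m - 1) / 2`;
hence `3 m (m - 1) / 2 ≤ m (n - 1)`, i.e. `3 m ≤ 2 n + 1`. For `n = 6` this gives `N(6) ≤ 4`,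
attained by `{(1,1), (4,2), (5,4), (6,3)}`, while the paper's fractional assignment has
value `30/7`. -/

open Finset

theorem Finset.sum_range_le_sum_of_injOn {α : Type*} {s : Finset α} {f : α → ℤ}
    (hf₀ : ∀ x ∈ s, 0 ≤ f x) (hf : Set.InjOn f s) :
    ∑ k ∈ range #s, (k : ℤ) ≤ ∑ x ∈ s, f x := by
  have h := sum_range_le_sum (s := s.image f) (c := 0) (by simpa using hf₀)
  rw [card_image_of_injOn hf, sum_image hf] at h
  simpa using h

theorem mem_Triangle {n : ℕ} {p : ℕ × ℕ} :
    p ∈ Triangle n ↔ 1 ≤ p.2 ∧ p.2 ≤ p.1 ∧ p.1 ≤ n := by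
  simp only [Triangle, mem_filter, mem_product, mem_Icc]
  omega

theorem NonAttacking.three_mul_card_le {n : ℕ} {S : Finset (ℕ × ℕ)} (hS : S ⊆ Triangle n)
    (h : NonAttacking S) : 3 * #S ≤ 2 * n + 1 := by
  have hcell : ∀ p ∈ S, 1 ≤ p.2 ∧ p.2 ≤ p.1 ∧ p.1 ≤ n := fun p hp => mem_Triangle.1 (hS hp)
  have hrow : ∑ k ∈ range #S, (k : ℤ) ≤ ∑ p ∈ S, ((n : ℤ) - p.1) :=
    sum_range_le_sum_of_injOn (fun p hp => by have := hcell p hp; omega)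
      fun p hp q hq hpq => by_contra fun hne => (h p hp q hq hne).1 (by omega)
  have hcol : ∑ k ∈ range #S, (k : ℤ) ≤ ∑ p ∈ S, ((p.2 : ℤ) - 1) :=
    sum_range_le_sum_of_injOn (fun p hp => by have := hcell p hp; omega)
      fun p hp q hq hpq => by_contra fun hne => (h p hp q hq hne).2.1 (by omega)
  have hdiag : ∑ k ∈ range #S, (k : ℤ) ≤ ∑ p ∈ S, ((p.1 : ℤ) - p.2) :=
    sum_range_le_sum_of_injOn (fun p hp => by have := hcell p hp; omega)
      fun p hp q hq hpq => by_contra fun hne => (h p hp q hq hne).2.2 hpq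
  have htotal : ∑ p ∈ S, ((n : ℤ) - p.1) + ∑ p ∈ S, ((p.2 : ℤ) - 1) + ∑ p ∈ S, ((p.1 : ℤ) - p.2)
      = #S * ((n : ℤ) - 1) := by
    rw [← sum_add_distrib, ← sum_add_distrib, sum_congr rfl fun p _ => show
      (n : ℤ) - p.1 + (p.2 - 1) + (p.1 - p.2) = n - 1 by ring, sum_const, nsmul_eq_mul]
  have hgauss : ∀ m : ℕ, (∑ k ∈ range m, (k : ℤ)) * 2 = m * (m - 1) := fun m => by
    induction m with
    | zero => simp
    | succ m ih => rw [sum_range_succ]; push_cast; linarith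
  have hkey : 3 * ((#S : ℤ) * (#S - 1)) ≤ 2 * (#S * ((n : ℤ) - 1)) := by
    linarith [hgauss #S]
  by_contra! hlt
  nlinarith

theorem maxDots_six : maxDots 6 = 4 := by
  refine IsGreatest.csSup_eq ⟨⟨{(1, 1), (4, 2), (5, 4), (6, 3)}, by decide, ?_, rfl⟩, ?_⟩
  · unfold NonAttacking
    decide
  · rintro m ⟨S, hS, h, rfl⟩
    have := h.three_mul_card_le hS
    omega

theorem Feasible6.sum_le_six {x : ℕ → ℕ → ℚ} (hx : Feasible6 x) :
    ∑ i ∈ Icc 1 6, ∑ j ∈ Icc 1 i, x i j ≤ 6 :=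
  (sum_le_sum hx.2.1).trans (by simp)

theorem le_LP6 {x : ℕ → ℕ → ℚ} (hx : Feasible6 x) :
    ((∑ i ∈ Icc 1 6, ∑ j ∈ Icc 1 i, x i j : ℚ) : ℝ) ≤ LP6 :=
  le_csSup ⟨6, by rintro v ⟨y, hy, rfl⟩; exact_mod_cast hy.sum_le_six⟩ ⟨x, hx, rfl⟩

/-- Row `i` lists `7 * x i j` for `j = i, i - 1, …, 1`, left to right as in the paper's figure. -/
def lpWitness (i j : ℕ) : ℚ :=
  ([[0], [0, 2], [0, 5, 2], [5, 0, 0, 2], [2, 0, 3, 1, 1], [0, 0, 2, 4, 1, 0]].getD (i - 1) []).getD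
    (i - j) 0 / 7

theorem feasible6_lpWitness : Feasible6 lpWitness := by
  unfold Feasible6
  decide +kernel

theorem sum_lpWitness : ∑ i ∈ Icc 1 6, ∑ j ∈ Icc 1 i, lpWitness i j = 30 / 7 := by
  decide +kernel

/-- There is a feasible fractional assignment on the triangle of size `6` with
total sum `30/7`; in particular `LP(6) ≥ 30/7 > N(6) = 4`. -/
theorem lp_six : (∃ x : ℕ → ℕ → ℚ, Feasible6 x ∧
      ∑ i ∈ Finset.Icc 1 6, ∑ j ∈ Finset.Icc 1 i, x i j = 30 / 7) ∧
    (30 / 7 : ℝ) ≤ LP6 ∧ ((maxDots 6 : ℝ) < 30 / 7) ∧ maxDots 6 = 4 := by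
  refine ⟨⟨lpWitness, feasible6_lpWitness, sum_lpWitness⟩, ?_, ?_, maxDots_six⟩
  · simpa [sum_lpWitness] using le_LP6 feasible6_lpWitness
  · rw [maxDots_six]
    norm_num
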